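/- Let G be an r-regular simple graph on n vertices, n even, r ≥ n/2, containing a complete subgraph K_{n/2} on half the vertices. Then for every r' with r ≤ r' ≤ n - 1, there exists an r'-regular graph on the same vertex set whose edge set contains that of G. -/

import Mathlib

/-!
Since `A` is a clique on half of the vertices, every non-edge of an `r`-regular graph `G ⊇ K_A`
meets `A` in at most one end. If `r < n - 1`, the complement is regular of positive degree, so by
double counting it satisfies Hall's condition, and Hall's theorem gives an injective choice of a
non-neighbour for every vertex. Restricted to `A` it lands in `Aᶜ`, hence is a bijection `A ≃ Aᶜ`,
i.e. a perfect matching of the complement. Adding it raises the degree by one and keeps the clique,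
so the degree can be raised step by step up to `n - 1`.
-/

open Finset Function

namespace SimpleGraph

variable {V : Type*} {G H : SimpleGraph V}

lemma ncard_neighborSet_eq_degree (v : V) [Fintype (G.neighborSet v)] :
    (G.neighborSet v).ncard = G.degree v := by
  rw [Set.ncard_eq_toFinset_card']
  rfl

lemma ncard_neighborSet_compl [Fintype V] {r : ℕ} (hG : ∀ v, (G.neighborSet v).ncard = r)
    (v : V) : (Gᶜ.neighborSet v).ncard = Fintype.card V - 1 - r := by
  classical
  rw [ncard_neighborSet_eq_degree, degree_compl, ← ncard_neighborSet_eq_degree, hG]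

theorem exists_injective_forall_adj [Fintype V] {d : ℕ} (hd : 0 < d)
    (hH : ∀ v, (H.neighborSet v).ncard = d) :
    ∃ f : V → V, Injective f ∧ ∀ v, H.Adj v (f v) := by
  classical
  have hdeg : ∀ v, H.degree v = d := fun v => by rw [← ncard_neighborSet_eq_degree, hH]
  have hall : ∀ S : Finset V, #S ≤ #(S.biUnion fun v => H.neighborFinset v) := fun S => by
    refine Nat.le_of_mul_le_mul_right (card_mul_le_card_mul H.Adj (fun a ha => ?_)
      fun b _ => ?_) hd
    · rw [← hdeg a, ← card_neighborFinset_eq_degree]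
      refine card_le_card fun b hb => (mem_bipartiteAbove _).mpr ⟨?_, (mem_neighborFinset ..).mp hb⟩
      exact mem_biUnion.mpr ⟨a, ha, hb⟩
    · rw [← hdeg b, ← card_neighborFinset_eq_degree]
      refine card_le_card fun a ha => ?_
      exact (mem_neighborFinset ..).mpr ((mem_bipartiteBelow _).mp ha).2.symm
  obtain ⟨f, hf, hadj⟩ := (all_card_le_biUnion_card_iff_exists_injective _).mp hall
  exact ⟨f, hf, fun v => (mem_neighborFinset ..).mp (hadj v)⟩

theorem IsIndepSet.exists_equiv_compl_forall_adj [Finite V] {A : Set V} (hA : H.IsIndepSet A)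
    (hcard : 2 * A.ncard = Nat.card V) {f : V → V} (hf : Injective f)
    (hadj : ∀ v, H.Adj v (f v)) : ∃ e : A ≃ (Aᶜ : Set V), ∀ a : A, H.Adj a (e a) := by
  let g : A → (Aᶜ : Set V) := fun a => ⟨f a, fun h => hA a.2 h (hadj a).ne (hadj a)⟩
  have hg : Injective g := fun a b h => Subtype.ext (hf (congrArg Subtype.val h))
  have hcard_le : Nat.card (Aᶜ : Set V) ≤ Nat.card A := by
    rw [Nat.card_coe_set_eq, Nat.card_coe_set_eq]
    have := A.ncard_add_ncard_compl
    omega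
  exact ⟨Equiv.ofBijective g (hg.bijective_of_nat_card_le hcard_le), fun a => hadj a⟩

lemma ncard_neighborSet_sup_spanningCoe [Finite V] {M : Gᶜ.Subgraph} (hM : M.IsPerfectMatching)
    (v : V) : ((G ⊔ M.spanningCoe).neighborSet v).ncard = (G.neighborSet v).ncard + 1 := by
  obtain ⟨w, hvw, huniq⟩ := Subgraph.isPerfectMatching_iff.mp hM v
  have hM_nbr : M.spanningCoe.neighborSet v = {w} := Set.ext fun u => ⟨huniq u, fun h => h ▸ hvw⟩
  rw [neighborSet_sup, hM_nbr, Set.union_singleton]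
  exact Set.ncard_insert_of_notMem fun h : G.Adj v w => (M.adj_sub hvw).2 h

theorem IsClique.exists_le_ncard_neighborSet_eq_succ [Fintype V] {r : ℕ}
    (hG : ∀ v, (G.neighborSet v).ncard = r) {A : Set V} (hA : G.IsClique A)
    (hcard : 2 * A.ncard = Fintype.card V) (hr : r + 1 < Fintype.card V) :
    ∃ G' : SimpleGraph V, G ≤ G' ∧ ∀ v, (G'.neighborSet v).ncard = r + 1 := by
  obtain ⟨f, hf, hadj⟩ := exists_injective_forall_adj (by omega : 0 < Fintype.card V - 1 - r)
    (ncard_neighborSet_compl hG)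
  obtain ⟨e, he⟩ := (G.isIndepSet_compl.mpr hA).exists_equiv_compl_forall_adj
    (by rwa [Nat.card_eq_fintype_card]) hf hadj
  obtain ⟨M, hverts, hM⟩ := Subgraph.IsMatching.exists_of_disjoint_sets_of_equiv
    disjoint_compl_right e he
  have hMperfect : M.IsPerfectMatching :=
    ⟨hM, fun v => by simp [hverts]⟩
  exact ⟨G ⊔ M.spanningCoe, le_sup_left, fun v => by
    rw [ncard_neighborSet_sup_spanningCoe hMperfect, hG]⟩

end SimpleGraph

theorem stmt_11_general {V : Type*} [Fintype V] (G : SimpleGraph V) (r : ℕ)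
    (hreg : ∀ v : V, (G.neighborSet v).ncard = r)
    (A : Set V) (hAcard : 2 * A.ncard = Fintype.card V)
    (hclique : ∀ a ∈ A, ∀ b ∈ A, a ≠ b → G.Adj a b) :
    ∀ r' : ℕ, r ≤ r' → r' ≤ Fintype.card V - 1 →
      ∃ G' : SimpleGraph V, G ≤ G' ∧ ∀ v : V, (G'.neighborSet v).ncard = r' := by
  intro r' hrr'
  induction r', hrr' using Nat.le_induction with
  | base => exact fun _ => ⟨G, le_rfl, hreg⟩
  | succ k _ ih =>
    intro hk
    obtain ⟨G', hGG', hG'⟩ := ih (by omega)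
    obtain ⟨G'', hG'G'', hG''⟩ :=
      (SimpleGraph.IsClique.mono hGG' fun a ha b hb hab => hclique a ha b hb hab).exists_le_ncard_neighborSet_eq_succ hG' hAcard (by omega)
    exact ⟨G'', hGG'.trans hG'G'', hG''⟩

/-- If `G` is `r`-regular with `n` even, `r ≥ n/2`, and contains a clique on half
the vertices, then for every `r'` with `r ≤ r' ≤ n - 1` there is an `r'`-regular
graph on the same vertex set containing `G`. -/
theorem stmt_11 {V : Type*} [Fintype V] (G : SimpleGraph V) (r : ℕ)
    (hreg : ∀ v : V, (G.neighborSet v).ncard = r)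
    (heven : Even (Fintype.card V))
    (hr : Fintype.card V ≤ 2 * r)
    (A : Set V) (hAcard : 2 * A.ncard = Fintype.card V)
    (hclique : ∀ a ∈ A, ∀ b ∈ A, a ≠ b → G.Adj a b) :
    ∀ r' : ℕ, r ≤ r' → r' ≤ Fintype.card V - 1 →
      ∃ G' : SimpleGraph V, G ≤ G' ∧ ∀ v : V, (G'.neighborSet v).ncard = r' :=
  stmt_11_general G r hreg A hAcard hclique
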